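/- arXiv:2003.03420 — 2 statements merged into one kernel-verified Lean document; each statement's English description precedes it below -/
import Mathlib

section
/- For every d ∈ ℕ there exist real numbers α_{d,0}, α_d, α_{d,1} > 0 with α_{d,0} < α_d < α_{d,1} such that spr(p_{d,α_d}) = 1, spr(p_{d,α}) < 1 for all α ∈ (α_{d,0}, α_d), and spr(p_{d,α}) > 1 for all α ∈ (α_d, α_{d,1}). -/
/-!
Write `p_{d,α} = A - α B` with `A = X^(d+1) D` monic and `deg B < deg A`. For a monic `q` of
degree `e`, every `z` lies within `‖q(z)‖^(1/e)` of a root of `q`; since `(A - t B)(z) =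
(s - t) B(z)` at a root `z` of `A - s B`, this (with a Cauchy bound on the roots) makes
`α ↦ spr(A - α B)` continuous. It is `< 1` at `α = 0`, as the roots of `A` lie in the open disk,
and unbounded as `α → ∞`. It equals `1` only finitely often: if `|z| = 1` and `A(z) = α B(z)`
with `α` real, then `z̄ = z⁻¹` gives `A(z⁻¹) = α B(z⁻¹)` too, so `z` is a root of
`Q = A·B* - A*·B` (reversals at degree `deg A`), and `Q ≠ 0` because at a root `z₀` of `D` it
reduces to `-A*(z₀) B(z₀) ≠ 0`. Then `α_d = inf {α ≥ 0 : spr > 1}` is an isolated point of the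
level set `{spr = 1}` at which the spectral radius crosses `1` from below.
-/

open Polynomial

noncomputable def spr (r : ℂ[X]) : ℝ := sSup ((fun z : ℂ => ‖z‖) '' {z : ℂ | r.IsRoot z})

noncomputable def sprR (r : ℝ[X]) : ℝ := spr (r.map (algebraMap ℝ ℂ))

noncomputable def pda (N D : ℝ[X]) (d : ℕ) (α : ℝ) : ℝ[X] :=
  X ^ (d + 1) * D - C α * ((X - 1) * N)

open Filter Topology Set

theorem Continuous.exists_upcrossing {f : ℝ → ℝ} (hf : Continuous f) {c K : ℝ} (h0 : f 0 < c)
    (hK0 : 0 < K) (hK : c < f K) (hfin : {t | f t = c}.Finite) :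
    ∃ α₀ α α₁ : ℝ, 0 < α₀ ∧ α₀ < α ∧ α < α₁ ∧ f α = c ∧
      (∀ t ∈ Ioo α₀ α, f t < c) ∧ (∀ t ∈ Ioo α α₁, c < f t) := by
  set U := {t | 0 ≤ t ∧ c < f t}
  have hUne : U.Nonempty := ⟨K, hK0.le, hK⟩
  have hUbdd : BddBelow U := ⟨0, fun _ h => h.1⟩
  set α := sInf U
  have hα0 : 0 ≤ α := le_csInf hUne fun _ h => h.1
  have hbelow : ∀ t, 0 ≤ t → t < α → f t ≤ c := fun t ht htα =>
    not_lt.1 fun h => (csInf_le hUbdd ⟨ht, h⟩).not_gt htα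
  have hge : c ≤ f α := closure_minimal (fun t ht => ht.2.le) (isClosed_le continuous_const hf)
    (csInf_mem_closure hUne hUbdd)
  have hαpos : 0 < α := hα0.lt_of_ne fun h => by rw [← h] at hge; linarith
  have hle : f α ≤ c := by
    have : closure (Ico 0 α) ⊆ {t | f t ≤ c} :=
      closure_minimal (fun t ht => hbelow t ht.1 ht.2) (isClosed_le hf continuous_const)
    rw [closure_Ico hαpos.ne] at this
    exact this ⟨hα0, le_rfl⟩
  obtain ⟨ε, hε, hball⟩ :=
    Metric.isOpen_iff.1 (hfin.sdiff (t := {α})).isClosed.isOpen_compl α (by simp)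
  have hiso : ∀ t ∈ Ioo (α - ε) (α + ε), t ≠ α → f t ≠ c := fun t ht hne hft =>
    hball (by rwa [Real.ball_eq_Ioo]) ⟨hft, hne⟩
  refine ⟨max (α - ε) (α / 2), α, α + ε, lt_max_of_lt_right (half_pos hαpos),
    max_lt (by linarith) (by linarith), by linarith, le_antisymm hle hge, ?_, ?_⟩
  · rintro t ⟨hα₀t, htα⟩
    rw [max_lt_iff] at hα₀t
    exact (hbelow t (by linarith) htα).lt_of_ne (hiso t ⟨hα₀t.1, by linarith⟩ htα.ne)
  · rintro t ⟨hαt, htα₁⟩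
    by_contra! hft
    obtain ⟨u, huU, hut⟩ := exists_lt_of_csInf_lt hUne hαt
    have hαu : α < u := (csInf_le hUbdd huU).lt_of_ne fun h => by
      rw [← h] at huU; linarith [huU.2]
    obtain ⟨γ, hγ, hfγ⟩ := intermediate_value_Icc' hut.le hf.continuousOn ⟨hft, huU.2.le⟩
    exact hiso γ ⟨by linarith [hγ.1], by linarith [hγ.2]⟩ (by linarith [hγ.1]) hfγ

namespace Polynomial

theorem IsRoot.norm_le_sum_norm_coeff_add_one {K : Type*} [NormedDivisionRing K] {p : K[X]}
    (hp : p.Monic) {z : K} (hz : p.IsRoot z) :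
    ‖z‖ ≤ ∑ i ∈ Finset.range p.natDegree, ‖p.coeff i‖ + 1 := by
  have h := hz.norm_lt_cauchyBound hp.ne_zero
  have hsup : (Finset.range p.natDegree).sup (‖p.coeff ·‖₊) ≤
      ∑ i ∈ Finset.range p.natDegree, ‖p.coeff i‖₊ :=
    Finset.sup_le fun i hi => Finset.single_le_sum (f := (‖p.coeff ·‖₊)) (fun _ _ => zero_le) hi
  rw [cauchyBound, hp.leadingCoeff, nnnorm_one, div_one] at h
  have : ‖z‖₊ ≤ ∑ i ∈ Finset.range p.natDegree, ‖p.coeff i‖₊ + 1 := (h.trans_le (by gcongr)).le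
  simpa using NNReal.coe_le_coe.2 this

theorem aeval_reflect {R K : Type*} [CommRing R] [Field K] [Algebra R K] {p : R[X]} {n : ℕ}
    (hn : p.natDegree ≤ n) {z : K} (hz : z ≠ 0) :
    aeval z (reflect n p) = z ^ n * aeval z⁻¹ p := by
  let := invertibleOfNonzero (inv_ne_zero hz)
  have h := eval₂_reflect_mul_pow (algebraMap R K) z⁻¹ n p hn
  rw [invOf_eq_inv, inv_inv] at h
  rw [aeval_def, aeval_def, ← h, mul_left_comm, ← mul_pow, mul_inv_cancel₀ hz, one_pow, mul_one]

section Complex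

variable {p : ℂ[X]}

theorem le_spr (hp : p ≠ 0) {z : ℂ} (hz : p.IsRoot z) : ‖z‖ ≤ spr p :=
  le_csSup ((finite_setOfPred_isRoot hp).image _).bddAbove ⟨z, hz, rfl⟩

theorem exists_isRoot_norm_eq_spr (hp : 0 < p.natDegree) : ∃ z, p.IsRoot z ∧ ‖z‖ = spr p := by
  obtain ⟨z, hz⟩ := Complex.exists_root (natDegree_pos_iff_degree_pos.1 hp)
  have hne : ((fun z : ℂ => ‖z‖) '' {z : ℂ | p.IsRoot z}).Nonempty := ⟨_, z, hz, rfl⟩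
  exact hne.csSup_mem ((finite_setOfPred_isRoot (ne_zero_of_natDegree_gt hp)).image _)

theorem norm_eval_eq_prod_roots (hp : p.Monic) (z : ℂ) :
    ‖p.eval z‖ = (p.roots.map fun r => ‖z - r‖).prod := by
  conv_lhs => rw [← prod_multiset_X_sub_C_of_monic_of_roots_card_eq hp
    IsAlgClosed.card_roots_eq_natDegree]
  rw [eval_multiset_prod, Multiset.map_map, ← normHom_apply, map_multiset_prod,
    Multiset.map_map]
  simp [Function.comp_def]

theorem pow_natDegree_le_norm_eval (hp : p.Monic) {z : ℂ} {δ : ℝ} (hδ : 0 ≤ δ)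
    (h : ∀ r, p.IsRoot r → δ ≤ ‖z - r‖) : δ ^ p.natDegree ≤ ‖p.eval z‖ := by
  rw [norm_eval_eq_prod_roots hp, ← IsAlgClosed.card_roots_eq_natDegree, ← Multiset.prod_replicate,
    ← Multiset.map_const']
  exact Multiset.prod_map_le_prod_map₀ _ _ (fun _ _ => hδ)
    fun r hr => h r (isRoot_of_mem_roots hr)

theorem norm_eval_le_pow_natDegree (hp : p.Monic) {z : ℂ} {c : ℝ}
    (h : ∀ r, p.IsRoot r → ‖z - r‖ ≤ c) : ‖p.eval z‖ ≤ c ^ p.natDegree := by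
  rw [norm_eval_eq_prod_roots hp, ← IsAlgClosed.card_roots_eq_natDegree, ← Multiset.prod_replicate,
    ← Multiset.map_const']
  exact Multiset.prod_map_le_prod_map₀ _ _ (fun _ _ => norm_nonneg _)
    fun r hr => h r (isRoot_of_mem_roots hr)

theorem exists_isRoot_norm_sub_pow_le (hp : p.Monic) (h0 : 0 < p.natDegree) (z : ℂ) :
    ∃ r, p.IsRoot r ∧ ‖z - r‖ ^ p.natDegree ≤ ‖p.eval z‖ := by
  have hne : p.roots.toFinset.Nonempty := by
    simpa [Multiset.toFinset_nonempty, ← Multiset.card_pos, IsAlgClosed.card_roots_eq_natDegree]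
  obtain ⟨r, hr, hmin⟩ := p.roots.toFinset.exists_min_image (fun r => ‖z - r‖) hne
  rw [Multiset.mem_toFinset] at hr
  refine ⟨r, isRoot_of_mem_roots hr, pow_natDegree_le_norm_eval hp (norm_nonneg _) fun r' hr' => ?_⟩
  exact hmin r' (Multiset.mem_toFinset.2 ((mem_roots hp.ne_zero).2 hr'))

end Complex

section Pencil

variable {R : Type*} [Ring R] {A B : R[X]}

theorem natDegree_C_mul_lt (hBA : B.natDegree < A.natDegree) (s : R) :
    (C s * B).natDegree < A.natDegree :=
  natDegree_C_mul_le s B |>.trans_lt hBA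

theorem monic_sub_C_mul (hA : A.Monic) (hBA : B.natDegree < A.natDegree) (s : R) :
    (A - C s * B).Monic :=
  hA.sub_of_left (degree_lt_degree (natDegree_C_mul_lt hBA s))

theorem natDegree_sub_C_mul (hBA : B.natDegree < A.natDegree) (s : R) :
    (A - C s * B).natDegree = A.natDegree :=
  natDegree_sub_eq_left_of_natDegree_lt (natDegree_C_mul_lt hBA s)

end Pencil

section ComplexPencil

variable {A B : ℂ[X]}

theorem eval_sub_C_mul_of_isRoot {s t z : ℂ} (hz : (A - C t * B).IsRoot z) :
    (A - C s * B).eval z = (t - s) * B.eval z := by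
  simp only [IsRoot, eval_sub, eval_mul, eval_C] at hz ⊢
  linear_combination hz

theorem lowerSemicontinuous_spr_sub_C_mul (hA : A.Monic) (hBA : B.natDegree < A.natDegree) :
    LowerSemicontinuous fun s => spr (A - C s * B) := by
  intro t y hy
  have hdeg : 0 < A.natDegree := (Nat.zero_le _).trans_lt hBA
  obtain ⟨z, hz, hzt⟩ := exists_isRoot_norm_eq_spr ((natDegree_sub_C_mul hBA t).symm ▸ hdeg)
  have hδ : 0 < ‖z‖ - y := by linarith
  have hlim : Tendsto (fun s => ‖(t - s) * B.eval z‖) (𝓝 t) (𝓝 0) := by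
    simpa using (((continuous_const (y := t)).sub continuous_id).mul
      (continuous_const (y := B.eval z))).norm.tendsto t
  filter_upwards [hlim.eventually_lt_const (pow_pos hδ A.natDegree)] with s hs
  obtain ⟨r, hr, hzr⟩ := exists_isRoot_norm_sub_pow_le (monic_sub_C_mul hA hBA s)
    ((natDegree_sub_C_mul hBA s).symm ▸ hdeg) z
  rw [natDegree_sub_C_mul hBA, eval_sub_C_mul_of_isRoot hz] at hzr
  have hzr' : ‖z - r‖ < ‖z‖ - y := lt_of_pow_lt_pow_left₀ _ hδ.le (hzr.trans_lt hs)
  calc y < ‖z‖ - ‖z - r‖ := by linarith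
    _ ≤ ‖r‖ := by linarith [norm_sub_norm_le z r]
    _ ≤ spr (A - C s * B) := le_spr (monic_sub_C_mul hA hBA s).ne_zero hr

theorem exists_forall_isRoot_sub_C_mul_norm_le (hA : A.Monic) (hBA : B.natDegree < A.natDegree)
    (t : ℂ) : ∃ R, ∀ s, ‖s - t‖ ≤ 1 → ∀ w, (A - C s * B).IsRoot w → ‖w‖ ≤ R := by
  refine ⟨∑ i ∈ Finset.range A.natDegree, (‖A.coeff i‖ + (‖t‖ + 1) * ‖B.coeff i‖) + 1,
    fun s hs w hw => ?_⟩
  refine (hw.norm_le_sum_norm_coeff_add_one (monic_sub_C_mul hA hBA s)).trans ?_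
  rw [natDegree_sub_C_mul hBA]
  gcongr with i
  have hst : ‖s‖ ≤ ‖t‖ + 1 := by linarith [norm_le_norm_add_norm_sub' s t]
  calc ‖(A - C s * B).coeff i‖ ≤ ‖A.coeff i‖ + ‖s‖ * ‖B.coeff i‖ := by
        simpa only [coeff_sub, coeff_C_mul, norm_mul] using norm_sub_le (A.coeff i) (s * B.coeff i)
    _ ≤ ‖A.coeff i‖ + (‖t‖ + 1) * ‖B.coeff i‖ := by gcongr

theorem upperSemicontinuous_spr_sub_C_mul (hA : A.Monic) (hBA : B.natDegree < A.natDegree) :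
    UpperSemicontinuous fun s => spr (A - C s * B) := by
  intro t y hy
  have hdeg : 0 < A.natDegree := (Nat.zero_le _).trans_lt hBA
  obtain ⟨R, hR⟩ := exists_forall_isRoot_sub_C_mul_norm_le hA hBA t
  obtain ⟨M, hM⟩ := (isCompact_closedBall (0 : ℂ) R).exists_bound_of_continuousOn
    B.continuous.continuousOn
  have hδ : 0 < y - spr (A - C t * B) := by linarith
  have hlim : Tendsto (fun s => ‖s - t‖ * M) (𝓝 t) (𝓝 0) := by
    have : Continuous fun s : ℂ => ‖s - t‖ * M := by fun_prop
    simpa using this.tendsto t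
  filter_upwards [hlim.eventually_lt_const (pow_pos hδ A.natDegree),
    Metric.closedBall_mem_nhds t one_pos] with s hs hs1
  rw [Metric.mem_closedBall, dist_eq_norm] at hs1
  obtain ⟨w, hw, hws⟩ := exists_isRoot_norm_eq_spr ((natDegree_sub_C_mul hBA s).symm ▸ hdeg)
  obtain ⟨r, hr, hwr⟩ := exists_isRoot_norm_sub_pow_le (monic_sub_C_mul hA hBA t)
    ((natDegree_sub_C_mul hBA t).symm ▸ hdeg) w
  rw [natDegree_sub_C_mul hBA, eval_sub_C_mul_of_isRoot hw, norm_mul] at hwr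
  have hBw : ‖B.eval w‖ ≤ M := hM w (mem_closedBall_zero_iff.2 (hR s hs1 w hw))
  have hwr' : ‖w - r‖ < y - spr (A - C t * B) :=
    lt_of_pow_lt_pow_left₀ _ hδ.le <| hwr.trans_lt <|
      (mul_le_mul_of_nonneg_left hBw (norm_nonneg _)).trans_lt hs
  calc spr (A - C s * B) = ‖w‖ := hws.symm
    _ ≤ ‖r‖ + ‖w - r‖ := norm_le_norm_add_norm_sub' w r
    _ < y := by linarith [le_spr (monic_sub_C_mul hA hBA t).ne_zero hr]

theorem continuous_spr_sub_C_mul (hA : A.Monic) (hBA : B.natDegree < A.natDegree) :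
    Continuous fun s => spr (A - C s * B) :=
  continuous_iff_lower_upperSemicontinuous.2
    ⟨lowerSemicontinuous_spr_sub_C_mul hA hBA, upperSemicontinuous_spr_sub_C_mul hA hBA⟩

theorem exists_lt_spr_sub_C_mul (hA : A.Monic) (hBA : B.natDegree < A.natDegree) (hB : B ≠ 0)
    (c : ℝ) : ∃ K : ℝ, 0 < K ∧ c < spr (A - C (K : ℂ) * B) := by
  obtain ⟨z, hz⟩ := (finite_setOfPred_isRoot hB).exists_notMem
  have hBz : 0 < ‖B.eval z‖ := norm_pos_iff.2 hz
  set K := (‖A.eval z‖ + (‖z‖ + |c|) ^ A.natDegree + 1) / ‖B.eval z‖ with hK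
  have hK0 : 0 < K := by positivity
  refine ⟨K, hK0, lt_of_not_ge fun hc => ?_⟩
  have hroots : ∀ r, (A - C (K : ℂ) * B).IsRoot r → ‖z - r‖ ≤ ‖z‖ + |c| := by
    intro r hr
    linarith [norm_sub_le z r, le_spr (monic_sub_C_mul hA hBA K).ne_zero hr, le_abs_self c]
  have hle := norm_eval_le_pow_natDegree (monic_sub_C_mul hA hBA K) hroots
  have hge : K * ‖B.eval z‖ - ‖A.eval z‖ ≤ ‖(A - C (K : ℂ) * B).eval z‖ := by
    rw [eval_sub, eval_mul, eval_C, norm_sub_rev]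
    simpa only [norm_mul, Complex.norm_real, Real.norm_of_nonneg hK0.le] using
      norm_sub_norm_le ((K : ℂ) * B.eval z) (A.eval z)
  rw [natDegree_sub_C_mul hBA] at hle
  rw [hK, div_mul_cancel₀ _ hBz.ne'] at hge
  linarith

end ComplexPencil

section Real

variable {A B : ℝ[X]}

theorem sprR_sub_C_mul (t : ℝ) :
    sprR (A - C t * B) = spr (A.map (algebraMap ℝ ℂ) - C (t : ℂ) * B.map (algebraMap ℝ ℂ)) := by
  simp [sprR, Polynomial.map_sub, Polynomial.map_mul]

theorem exists_aeval_eq_zero_norm_eq_sprR {p : ℝ[X]} (hp : 0 < p.natDegree) :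
    ∃ z : ℂ, aeval z p = 0 ∧ ‖z‖ = sprR p := by
  obtain ⟨z, hz, hzp⟩ := exists_isRoot_norm_eq_spr
    ((natDegree_map_eq_of_injective (algebraMap ℝ ℂ).injective p).symm ▸ hp)
  exact ⟨z, by rwa [IsRoot, eval_map_algebraMap] at hz, hzp⟩

theorem continuous_sprR_sub_C_mul (hA : A.Monic) (hBA : B.natDegree < A.natDegree) :
    Continuous fun t : ℝ => sprR (A - C t * B) := by
  simp only [sprR_sub_C_mul]
  refine (continuous_spr_sub_C_mul (hA.map _) ?_).comp Complex.continuous_ofReal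
  rwa [hA.natDegree_map, natDegree_map_eq_of_injective (algebraMap ℝ ℂ).injective]

theorem exists_lt_sprR_sub_C_mul (hA : A.Monic) (hBA : B.natDegree < A.natDegree) (hB : B ≠ 0)
    (c : ℝ) : ∃ K : ℝ, 0 < K ∧ c < sprR (A - C K * B) := by
  simp only [sprR_sub_C_mul]
  refine exists_lt_spr_sub_C_mul (hA.map _) ?_ ((Polynomial.map_ne_zero_iff
    (algebraMap ℝ ℂ).injective).2 hB) c
  rwa [hA.natDegree_map, natDegree_map_eq_of_injective (algebraMap ℝ ℂ).injective]

theorem aeval_reflect_natDegree_ne_zero {p : ℝ[X]} (hp : ∀ z : ℂ, aeval z p = 0 → ‖z‖ < 1)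
    {z : ℂ} (hz : ‖z‖ ≤ 1) : aeval z (reflect p.natDegree p) ≠ 0 := by
  have hp0 : p ≠ 0 := by rintro rfl; simpa using hp 1
  rcases eq_or_ne z 0 with rfl | hz0
  · rw [← coeff_zero_eq_aeval_zero']
    simpa [coeff_reflect] using hp0
  · rw [aeval_reflect le_rfl hz0]
    refine mul_ne_zero (pow_ne_zero _ hz0) fun h => ?_
    have := hp _ h
    rw [norm_inv] at this
    exact (one_le_inv₀ (norm_pos_iff.2 hz0)).2 hz |>.not_gt this

theorem finite_setOf_exists_aeval_sub_C_mul_eq_zero_of_norm_eq_one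
    (hBA : B.natDegree ≤ A.natDegree) (hA : ∀ z : ℂ, aeval z A = 0 → ‖z‖ < 1)
    (hAB : ∃ z : ℂ, aeval z A = 0 ∧ aeval z B ≠ 0) :
    {t : ℝ | ∃ z : ℂ, ‖z‖ = 1 ∧ aeval z (A - C t * B) = 0}.Finite := by
  set Q := A * reflect A.natDegree B - reflect A.natDegree A * B
  have hQ : Q ≠ 0 := by
    obtain ⟨z₀, hAz₀, hBz₀⟩ := hAB
    intro h
    have := congrArg (aeval z₀) h
    simp only [Q, map_sub, map_mul, hAz₀, zero_mul, zero_sub, neg_eq_zero, map_zero] at this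
    exact mul_ne_zero (aeval_reflect_natDegree_ne_zero hA (hA z₀ hAz₀).le) hBz₀ this
  refine ((Q.rootSet_finite ℂ).image fun z => (aeval z A / aeval z B).re).subset ?_
  rintro t ⟨z, hz1, hzt⟩
  have ht : aeval z A = t * aeval z B := by
    simp only [map_sub, map_mul, aeval_C, Complex.coe_algebraMap] at hzt
    linear_combination hzt
  have hBz : aeval z B ≠ 0 := fun h => (hA z (by rw [ht, h, mul_zero])).ne hz1
  have hz0 : z ≠ 0 := by rintro rfl; simp at hz1
  have ht' : aeval z⁻¹ A = t * aeval z⁻¹ B := by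
    rw [Complex.inv_eq_conj hz1, aeval_conj, aeval_conj, ht, map_mul, Complex.conj_ofReal]
  refine ⟨z, (mem_rootSet.2 ⟨hQ, ?_⟩), by simp [ht, hBz]⟩
  simp only [Q, map_sub, map_mul, aeval_reflect hBA hz0, aeval_reflect le_rfl hz0, ht, ht']
  ring

theorem sprR_lt_of_forall_aeval_eq_zero {p : ℝ[X]} (hp : 0 < p.natDegree) {c : ℝ}
    (h : ∀ z : ℂ, aeval z p = 0 → ‖z‖ < c) : sprR p < c := by
  obtain ⟨z, hz, hzp⟩ := exists_aeval_eq_zero_norm_eq_sprR hp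
  exact hzp ▸ h z hz

theorem finite_setOf_sprR_sub_C_mul_eq_one (hBA : B.natDegree < A.natDegree)
    (hA : ∀ z : ℂ, aeval z A = 0 → ‖z‖ < 1) (hAB : ∃ z : ℂ, aeval z A = 0 ∧ aeval z B ≠ 0) :
    {t : ℝ | sprR (A - C t * B) = 1}.Finite := by
  refine (finite_setOf_exists_aeval_sub_C_mul_eq_zero_of_norm_eq_one hBA.le hA hAB).subset
    fun t ht => ?_
  obtain ⟨z, hz, hzt⟩ := exists_aeval_eq_zero_norm_eq_sprR
    ((natDegree_sub_C_mul hBA t).symm ▸ (Nat.zero_le _).trans_lt hBA)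
  exact ⟨z, hzt.trans ht, hz⟩

theorem exists_sprR_sub_C_mul_upcrossing (hA : A.Monic) (hBA : B.natDegree < A.natDegree)
    (hAroots : ∀ z : ℂ, aeval z A = 0 → ‖z‖ < 1) (hAB : ∃ z : ℂ, aeval z A = 0 ∧ aeval z B ≠ 0) :
    ∃ α₀ α α₁ : ℝ, 0 < α₀ ∧ α₀ < α ∧ α < α₁ ∧ sprR (A - C α * B) = 1 ∧
      (∀ t ∈ Ioo α₀ α, sprR (A - C t * B) < 1) ∧ (∀ t ∈ Ioo α α₁, 1 < sprR (A - C t * B)) := by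
  have hB : B ≠ 0 := by
    rintro rfl
    obtain ⟨z, -, hz⟩ := hAB
    simp at hz
  obtain ⟨K, hK0, hK⟩ := exists_lt_sprR_sub_C_mul hA hBA hB 1
  have h0 : sprR (A - C 0 * B) < 1 := by
    rw [C_0, zero_mul, sub_zero]
    exact sprR_lt_of_forall_aeval_eq_zero ((Nat.zero_le _).trans_lt hBA) hAroots
  exact (continuous_sprR_sub_C_mul hA hBA).exists_upcrossing h0 hK0 hK
    (finite_setOf_sprR_sub_C_mul_eq_one hBA hAroots hAB)

end Real

section Pda

variable {N D : ℝ[X]}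

theorem natDegree_X_sub_one_mul_lt (hN : N ≠ 0) (hD : D.Monic) (hdeg : N.degree < D.degree)
    (n : ℕ) : ((X - 1) * N).natDegree < (X ^ (n + 1) * D).natDegree := by
  have hX1 : (X - 1 : ℝ[X]) ≠ 0 := X_sub_C_ne_zero 1
  rw [natDegree_mul hX1 hN, natDegree_mul (pow_ne_zero _ X_ne_zero) hD.ne_zero,
    natDegree_X_pow, ← C_1, natDegree_X_sub_C]
  linarith [natDegree_lt_natDegree hN hdeg]

theorem norm_lt_one_of_aeval_X_pow_mul_eq_zero (hD : ∀ z : ℂ, aeval z D = 0 → ‖z‖ < 1)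
    {n : ℕ} {z : ℂ} (hz : aeval z (X ^ n * D) = 0) : ‖z‖ < 1 := by
  rw [map_mul, map_pow, aeval_X] at hz
  rcases mul_eq_zero.1 hz with h | h
  · simp [pow_eq_zero_iff'.1 h]
  · exact hD z h

theorem exists_aeval_eq_zero_aeval_X_sub_one_mul_ne_zero (hco : IsCoprime N D)
    (hD : ∀ z : ℂ, aeval z D = 0 → ‖z‖ < 1) (hdeg : 0 < D.degree) :
    ∃ z : ℂ, aeval z D = 0 ∧ aeval z ((X - 1) * N) ≠ 0 := by
  obtain ⟨z, hz⟩ := Complex.exists_root (f := D.map (algebraMap ℝ ℂ)) (by rwa [degree_map])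
  rw [IsRoot, eval_map_algebraMap] at hz
  have hN : aeval z N ≠ 0 := fun h => by
    obtain ⟨u, v, huv⟩ := hco
    simpa [h, hz] using congrArg (aeval z) huv
  have hz1 : z - 1 ≠ 0 := sub_ne_zero.2 fun h => by simpa [h] using hD z hz
  exact ⟨z, hz, by simpa using mul_ne_zero hz1 hN⟩

end Pda

end Polynomial

theorem stmt6_general (N D : ℝ[X]) (hco : IsCoprime N D) (hD : D.Monic)
    (hdeg : N.degree < D.degree)
    (hDroots : ∀ z : ℂ, Polynomial.aeval z D = 0 → ‖z‖ < 1)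
    (hN : N ≠ 0) :
    ∀ d : ℕ, ∃ α₀ αd α₁ : ℝ, 0 < α₀ ∧ α₀ < αd ∧ αd < α₁ ∧
      sprR (pda N D d αd) = 1 ∧
      (∀ α ∈ Set.Ioo α₀ αd, sprR (pda N D d α) < 1) ∧
      (∀ α ∈ Set.Ioo αd α₁, sprR (pda N D d α) > 1) := by
  intro d
  obtain ⟨z, hDz, hBz⟩ := exists_aeval_eq_zero_aeval_X_sub_one_mul_ne_zero hco hDroots
    ((zero_le_degree_iff.2 hN).trans_lt hdeg)
  exact exists_sprR_sub_C_mul_upcrossing ((monic_X_pow _).mul hD)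
    (natDegree_X_sub_one_mul_lt hN hD hdeg d)
    (fun _ => norm_lt_one_of_aeval_X_pow_mul_eq_zero hDroots)
    ⟨z, by simp [hDz], hBz⟩

theorem stmt6 (N D : ℝ[X]) (hco : IsCoprime N D) (hD : D.Monic)
    (hdeg : N.degree < D.degree)
    (hDroots : ∀ z : ℂ, Polynomial.aeval z D = 0 → ‖z‖ < 1)
    (hN : N ≠ 0)
    (hNcirc : ∀ z : ℂ, ‖z‖ = 1 → Polynomial.aeval z N ≠ 0) :
    ∀ d : ℕ, ∃ α₀ αd α₁ : ℝ, 0 < α₀ ∧ α₀ < αd ∧ αd < α₁ ∧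
      sprR (pda N D d αd) = 1 ∧
      (∀ α ∈ Set.Ioo α₀ αd, sprR (pda N D d α) < 1) ∧
      (∀ α ∈ Set.Ioo αd α₁, sprR (pda N D d α) > 1) :=
  stmt6_general N D hco hD hdeg hDroots hN
end

section
/- For every d ∈ ℕ there exist real numbers α_{d,0}, α_d, α_{d,1} < 0 with α_{d,1} < α_d < α_{d,0} such that spr(p_{d,α_d}) = 1, spr(p_{d,α}) < 1 for all α ∈ (α_d, α_{d,0}), and spr(p_{d,α}) > 1 for all α ∈ (α_{d,1}, α_d). -/
/-!
The spectral radius `f α = sprR (pda N D d α)` is continuous in `α`: the polynomials are monic of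
fixed degree with coefficients affine in `α`, and roots of monic polynomials move continuously with
the coefficients. At `α = 0` the roots are `0` and those of `D`, so `f 0 < 1`; for `α` very
negative `f α > 1`, since otherwise Vieta's formulas would bound the coefficients. A root `z` on
the unit circle determines `α = z ^ (d + 1) D(z) / ((z - 1) N(z))`, and as the coefficients are
real, `z⁻¹ = conj z` is a root as well; this forces `z` to be a root of a fixed nonzero
polynomial, so `f = 1` at only finitely many `α`. The crossing of level `1` at
`sup {α < 0 | 1 < f α}` is therefore isolated and has the required sign pattern on both sides.
-/

open Polynomial

open Filter Topology Set

lemma spr_nonneg (p : ℂ[X]) : 0 ≤ spr p :=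
  Real.sSup_nonneg (by rintro _ ⟨z, -, rfl⟩; exact norm_nonneg z)

lemma norm_le_spr {p : ℂ[X]} (hp : p ≠ 0) {z : ℂ} (hz : p.IsRoot z) : ‖z‖ ≤ spr p :=
  le_csSup ((finite_setOfPred_isRoot hp).image _).bddAbove ⟨z, hz, rfl⟩

lemma exists_isRoot_norm_eq_spr {p : ℂ[X]} (hp : 0 < p.degree) :
    ∃ z, p.IsRoot z ∧ ‖z‖ = spr p := by
  obtain ⟨z, hz⟩ := Complex.exists_root hp
  obtain ⟨w, hw, hspr⟩ : spr p ∈ (fun z : ℂ ↦ ‖z‖) '' {z | p.IsRoot z} :=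
    Set.Nonempty.csSup_mem ⟨_, z, hz, rfl⟩
      ((finite_setOfPred_isRoot (ne_zero_of_degree_gt hp)).image _)
  exact ⟨w, hw, hspr⟩

lemma spr_lt_of_forall_norm_lt {p : ℂ[X]} (hp : p ≠ 0) {r : ℝ} (hr : 0 < r)
    (h : ∀ z, p.IsRoot z → ‖z‖ < r) : spr p < r := by
  rcases ((fun z : ℂ ↦ ‖z‖) '' {z : ℂ | p.IsRoot z}).eq_empty_or_nonempty with he | hne
  · rwa [spr, he, Real.sSup_empty]
  · rw [spr, ((finite_setOfPred_isRoot hp).image _).csSup_lt_iff hne]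
    rintro _ ⟨z, hz, rfl⟩
    exact h z hz

/-- This is `exists_roots_norm_sub_lt_of_norm_coeff_sub_lt` with `ε` chosen so that its radius
becomes `τ * max ‖a‖ 1`. -/
lemma exists_isRoot_norm_sub_lt {f g : ℂ[X]} (hf : f.Monic) (hg : g.Monic)
    (hdeg : g.natDegree = f.natDegree) {τ : ℝ} (hτ : 0 < τ)
    (hcoeff : ∀ i, ‖g.coeff i - f.coeff i‖ < τ ^ f.natDegree / (f.natDegree + 1))
    {a : ℂ} (ha : f.IsRoot a) : ∃ b, g.IsRoot b ∧ ‖a - b‖ < τ * max ‖a‖ 1 := by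
  have hn : f.natDegree ≠ 0 := fun h ↦ by simp [hf.natDegree_eq_zero.mp h] at ha
  obtain ⟨b, hb, hab⟩ := exists_roots_norm_sub_lt_of_norm_coeff_sub_lt (by positivity) ha hf hg
    hdeg hcoeff (IsAlgClosed.splits g)
  refine ⟨b, isRoot_of_mem_roots hb, ?_⟩
  rwa [mul_div_cancel₀ _ (by positivity), Real.pow_rpow_inv_natCast hτ.le hn] at hab

lemma spr_lt_spr_add {f g : ℂ[X]} (hf : f.Monic) (hg : g.Monic)
    (hdeg : g.natDegree = f.natDegree) (hpos : 0 < f.degree) {τ : ℝ} (hτ : 0 < τ)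
    (hcoeff : ∀ i, ‖g.coeff i - f.coeff i‖ < τ ^ f.natDegree / (f.natDegree + 1)) :
    spr f < spr g + τ * max (spr f) 1 := by
  obtain ⟨a, ha, hspr⟩ := exists_isRoot_norm_eq_spr hpos
  obtain ⟨b, hb, hab⟩ := exists_isRoot_norm_sub_lt hf hg hdeg hτ hcoeff ha
  have := norm_le_spr hg.ne_zero hb
  have := norm_le_norm_add_norm_sub' a b
  rw [← hspr]
  linarith

lemma eventually_forall_norm_coeff_sub_lt {S : Type*} [TopologicalSpace S] {p : S → ℂ[X]}
    {n : ℕ} (hdeg : ∀ t, (p t).natDegree ≤ n) (hcoeff : ∀ i, Continuous fun t ↦ (p t).coeff i)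
    (t₀ : S) {η : ℝ} (hη : 0 < η) : ∀ᶠ t in 𝓝 t₀, ∀ i, ‖(p t).coeff i - (p t₀).coeff i‖ < η := by
  filter_upwards [(Finset.range (n + 1)).eventually_all.mpr fun i _ ↦
    (hcoeff i).continuousAt.eventually (Metric.ball_mem_nhds _ hη)] with t ht i
  by_cases hi : i < n + 1
  · rw [← dist_eq_norm]; exact ht i (Finset.mem_range.mpr hi)
  · rw [coeff_eq_zero_of_natDegree_lt ((hdeg t).trans_lt (by omega)),
      coeff_eq_zero_of_natDegree_lt ((hdeg t₀).trans_lt (by omega)), sub_zero, norm_zero]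
    exact hη

theorem continuous_spr {S : Type*} [TopologicalSpace S] {p : S → ℂ[X]} {n : ℕ}
    (hmonic : ∀ t, (p t).Monic) (hdeg : ∀ t, (p t).natDegree = n)
    (hcoeff : ∀ i, Continuous fun t ↦ (p t).coeff i) : Continuous fun t ↦ spr (p t) := by
  rcases Nat.eq_zero_or_pos n with rfl | hn
  · simp only [fun t ↦ (hmonic t).natDegree_eq_zero.mp (hdeg t)]
    exact continuous_const
  refine Metric.continuous_iff'.mpr fun t₀ ε hε ↦ ?_
  set s := spr (p t₀)
  set τ := min (1 / 2) (ε / (2 * (s + 1)))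
  have hs : 0 ≤ s := spr_nonneg _
  have hτ : 0 < τ := lt_min (by norm_num) (by positivity)
  have hτε : τ * (s + 1) ≤ ε / 2 := by
    calc τ * (s + 1) ≤ ε / (2 * (s + 1)) * (s + 1) := by gcongr; exact min_le_right _ _
      _ = ε / 2 := by field_simp
  have hpos : ∀ t, 0 < (p t).degree := fun t ↦ by
    rw [degree_eq_natDegree (hmonic t).ne_zero, hdeg t]; exact_mod_cast hn
  filter_upwards [eventually_forall_norm_coeff_sub_lt (fun t ↦ (hdeg t).le) hcoeff t₀
    (show 0 < τ ^ n / (n + 1) by positivity)] with t ht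
  have hlow := spr_lt_spr_add (hmonic t₀) (hmonic t) (by rw [hdeg, hdeg]) (hpos t₀) hτ
    (by rw [hdeg]; exact ht)
  have hup := spr_lt_spr_add (hmonic t) (hmonic t₀) (by rw [hdeg, hdeg]) (hpos t) hτ
    (fun i ↦ by rw [norm_sub_rev, hdeg]; exact ht i)
  have hτ2 : τ ≤ 1 / 2 := min_le_left _ _
  have hu := spr_nonneg (p t)
  rw [Real.dist_eq, abs_lt]
  have hmax : max s 1 ≤ s + 1 := max_le (by linarith) (by linarith)
  constructor
  · nlinarith
  · rcases le_total (spr (p t)) 1 with h1 | h1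
    · rw [max_eq_right h1] at hup
      nlinarith
    · rw [max_eq_left h1] at hup
      nlinarith

section AffineFamily

variable {P T : ℝ[X]}

lemma degree_C_mul_lt (hT : T.degree < P.degree) (t : ℝ) : (C t * T).degree < P.degree := by
  rw [← smul_eq_C_mul]; exact (degree_smul_le t T).trans_lt hT

lemma monic_sub_C_mul (hP : P.Monic) (hT : T.degree < P.degree) (t : ℝ) :
    (P - C t * T).Monic :=
  hP.sub_of_left (degree_C_mul_lt hT t)

lemma natDegree_sub_C_mul (hT : T.degree < P.degree) (t : ℝ) :
    (P - C t * T).natDegree = P.natDegree :=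
  natDegree_eq_of_degree_eq (degree_sub_eq_left_of_degree_lt (degree_C_mul_lt hT t))

theorem continuous_sprR_sub_C_mul (hP : P.Monic) (hT : T.degree < P.degree) :
    Continuous fun t : ℝ ↦ sprR (P - C t * T) := by
  refine continuous_spr (n := P.natDegree) (fun t ↦ (monic_sub_C_mul hP hT t).map _)
    (fun t ↦ by rw [(monic_sub_C_mul hP hT t).natDegree_map, natDegree_sub_C_mul hT])
    fun i ↦ ?_
  simp only [coeff_map, coeff_sub, coeff_C_mul]
  fun_prop

/-- If every root had modulus at most `1`, Vieta's formulas would bound the coefficient of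
`P - C t * T` at the degree of `T` by a binomial coefficient; but it grows linearly in `|t|`. -/
theorem exists_neg_one_lt_sprR_sub_C_mul (hP : P.Monic) (hT : T.degree < P.degree) (hT0 : T ≠ 0) :
    ∃ A < 0, 1 < sprR (P - C A * T) := by
  set k := T.natDegree
  set b := T.leadingCoeff
  set c := P.coeff k
  set B : ℝ := |c| + P.natDegree.choose k + 1
  have hb : 0 < |b| := abs_pos.mpr (leadingCoeff_ne_zero.mpr hT0)
  have hB : 0 < B := by positivity
  refine ⟨-(B / |b|), neg_neg_of_pos (by positivity), ?_⟩
  by_contra! hspr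
  have hmonic := monic_sub_C_mul hP hT (-(B / |b|))
  have hmap : ((P - C (-(B / |b|)) * T).map (algebraMap ℝ ℂ)) ≠ 0 := (hmonic.map _).ne_zero
  have hcoeff := coeff_le_of_roots_le k hmonic (IsAlgClosed.splits _) fun z hz ↦
    (norm_le_spr hmap (isRoot_of_mem_roots hz)).trans hspr
  rw [one_pow, one_mul, natDegree_sub_C_mul hT, coeff_map, coeff_sub, coeff_C_mul,
    Complex.coe_algebraMap, Complex.norm_real, Real.norm_eq_abs] at hcoeff
  have : |B / |b| * b| = B := by
    rw [abs_mul, abs_div, abs_abs, div_mul_cancel₀ _ hb.ne', abs_of_pos hB]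
  have := abs_add_le (B / |b| * b + c) (-c)
  rw [neg_mul, sub_neg_eq_add, add_comm, coeff_natDegree] at hcoeff
  rw [add_neg_cancel_right, abs_neg] at this
  linarith

end AffineFamily

/-- The crossing is at `x' = sup {x < b | c < f x}`; finiteness of the level set isolates it. -/
theorem exists_isolated_downcrossing {f : ℝ → ℝ} (hf : Continuous f) {a b c : ℝ} (hab : a < b)
    (ha : c < f a) (hb : f b < c) (hfin : {x | f x = c}.Finite) :
    ∃ x₀ x' x₁, x₀ < b ∧ x₁ < x' ∧ x' < x₀ ∧ f x' = c ∧
      (∀ x ∈ Ioo x' x₀, f x < c) ∧ (∀ x ∈ Ioo x₁ x', c < f x) := by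
  set G := {x | x < b ∧ c < f x}
  have hGne : G.Nonempty := ⟨a, hab, ha⟩
  have hGbdd : BddAbove G := ⟨b, fun x hx ↦ hx.1.le⟩
  set x' := sSup G
  have hle : ∀ x ∈ G, x ≤ x' := fun x hx ↦ le_csSup hGbdd hx
  have hcx' : c ≤ f x' :=
    closure_minimal (fun x hx ↦ hx.2.le) (isClosed_le continuous_const hf)
      (csSup_mem_closure hGne hGbdd)
  have hx'b : x' < b :=
    (csSup_le hGne fun x hx ↦ hx.1.le).lt_of_ne fun h ↦ absurd (h ▸ hcx') (not_le.mpr hb)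
  have hfx' : f x' = c := by
    refine hcx'.antisymm' (not_lt.mp fun hlt ↦ ?_)
    have hG : G ∈ 𝓝 x' := (isOpen_Iio.inter (isOpen_lt continuous_const hf)).mem_nhds ⟨hx'b, hlt⟩
    obtain ⟨y, hx'y, hy⟩ := ((frequently_gt_nhds x').and_eventually hG).exists
    exact (hle y hy).not_gt hx'y
  have hiso : ∀ᶠ y in 𝓝 x', y < b ∧ (f y = c → y = x') := by
    filter_upwards [isOpen_Iio.mem_nhds hx'b,
      (hfin.sdiff (t := {x'})).isClosed.compl_mem_nhds fun h ↦ h.2 rfl] with y hyb hy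
    exact ⟨hyb, fun hfy ↦ by_contra fun hne ↦ hy ⟨hfy, hne⟩⟩
  obtain ⟨ε, hε, hball⟩ := Metric.eventually_nhds_iff.mp hiso
  have hnear : ∀ y, x' - ε < y → y < x' + ε → y < b ∧ (f y = c → y = x') :=
    fun y h₁ h₂ ↦ hball (by rw [Real.dist_eq, abs_lt]; constructor <;> linarith)
  obtain ⟨g, hg, hgx₁⟩ := exists_lt_of_lt_csSup hGne (show x' - ε / 2 < x' by linarith)
  have hgx' : g < x' := (hle g hg).lt_of_ne fun h ↦ (h ▸ hg.2).ne' hfx'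
  refine ⟨x' + ε / 2, x', x' - ε / 2, (hnear _ (by linarith) (by linarith)).1, by linarith,
    by linarith, hfx', fun x hx ↦ ?_, fun x hx ↦ ?_⟩
  · have hx' := hnear x (by linarith [hx.1]) (by linarith [hx.2])
    exact (not_lt.mp fun h ↦ (hle x ⟨hx'.1, h⟩).not_gt hx.1).lt_of_ne fun h ↦ hx.1.ne' (hx'.2 h)
  · by_contra! hcx
    obtain ⟨y, hy, hfy⟩ := isPreconnected_Ioo.intermediate_value hx ⟨hgx₁, hgx'⟩ hf.continuousOn
      ⟨hcx, hg.2.le⟩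
    exact hy.2.ne ((hnear y (by linarith [hy.1]) (by linarith [hy.2])).2 hfy)

lemma aeval_reverse {R K : Type*} [CommSemiring R] [Field K] [Algebra R K] (p : R[X]) {z : K}
    (hz : z ≠ 0) : aeval z p.reverse = z ^ p.natDegree * aeval z⁻¹ p := by
  have := invertibleOfNonzero (inv_ne_zero hz)
  have h := eval₂_reverse_mul_pow (algebraMap R K) z⁻¹ p
  rw [invOf_eq_inv, inv_inv] at h
  rw [aeval_def, aeval_def, ← h, inv_pow]
  field_simp

lemma IsCoprime.aeval_ne_zero {R A : Type*} [CommSemiring R] [CommSemiring A] [Nontrivial A]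
    [Algebra R A] {p q : R[X]} (h : IsCoprime p q) {z : A} (hp : aeval z p = 0) :
    aeval z q ≠ 0 := fun hq ↦ by
  obtain ⟨u, v, huv⟩ := h
  simpa [hp, hq] using congrArg (aeval z) huv

section PerturbedPolynomial

variable (N D : ℝ[X]) (d : ℕ)

lemma aeval_pda (α : ℝ) (z : ℂ) :
    aeval z (pda N D d α) = z ^ (d + 1) * aeval z D - α * ((z - 1) * aeval z N) := by
  simp [pda]

/-- Clearing denominators in `R z = R z⁻¹` for `R z = z ^ (d + 1) * D z / ((z - 1) * N z)`; on the
unit circle, where `z⁻¹ = conj z`, this says that `R z` is real. -/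
noncomputable def reciprocalPoly : ℝ[X] :=
  X ^ (2 * d + D.natDegree + 2) * (D * N.reverse) + X ^ (N.natDegree + 1) * (N * D.reverse)

variable {N D d}

lemma aeval_reciprocalPoly_eq_zero {α : ℝ} {z : ℂ} (hz : ‖z‖ = 1)
    (hroot : aeval z (pda N D d α) = 0) : aeval z (reciprocalPoly N D d) = 0 := by
  have hz0 : z ≠ 0 := norm_ne_zero_iff.mp (by rw [hz]; exact one_ne_zero)
  have hroot' : aeval z⁻¹ (pda N D d α) = 0 := by
    rw [Complex.inv_eq_conj hz, aeval_conj, hroot, map_zero]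
  rw [aeval_pda] at hroot hroot'
  simp only [reciprocalPoly, map_add, map_mul, map_pow, aeval_X, aeval_reverse _ hz0]
  have hconj : z * aeval z⁻¹ D + α * (z - 1) * z ^ (d + 1) * aeval z⁻¹ N = 0 := by
    have h : z * z⁻¹ = 1 := mul_inv_cancel₀ hz0
    have hpow : z⁻¹ ^ (d + 1) * z ^ (d + 1) = 1 := by rw [← mul_pow, mul_comm, h, one_pow]
    generalize z⁻¹ = u at *
    linear_combination z ^ (d + 2) * hroot' - z * aeval u D * hpow + α * aeval u N * z ^ (d + 1) * h
  linear_combination z ^ (N.natDegree + D.natDegree) *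
    (z ^ (d + 1) * aeval z⁻¹ N * hroot + aeval z N * hconj)

lemma reciprocalPoly_ne_zero (hco : IsCoprime N D) (hD : D.Monic) (hdeg : N.degree < D.degree)
    (hDroots : ∀ z : ℂ, aeval z D = 0 → ‖z‖ < 1) (hN : N ≠ 0) : reciprocalPoly N D d ≠ 0 := by
  have hmn : N.natDegree < D.natDegree := natDegree_lt_natDegree hN hdeg
  intro hQ
  by_cases hN0 : N.coeff 0 = 0
  · -- then `D 0 ≠ 0`, and at a root `w` of `D` the second summand of `reciprocalPoly` cannot vanish
    have hD0 : aeval (0 : ℂ) D ≠ 0 := hco.aeval_ne_zero (by simp [aeval_def, eval₂_at_zero, hN0])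
    obtain ⟨w, hw⟩ := Complex.exists_root (f := D.map (algebraMap ℝ ℂ))
      (by rw [degree_map, ← natDegree_pos_iff_degree_pos]; omega)
    rw [IsRoot, eval_map, ← aeval_def] at hw
    have hw0 : w ≠ 0 := by rintro rfl; exact hD0 hw
    have h := congrArg (aeval w) hQ
    simp only [reciprocalPoly, map_add, map_mul, map_pow, aeval_X, aeval_reverse _ hw0, hw,
      mul_zero, zero_mul, zero_add, map_zero, mul_eq_zero, pow_eq_zero_iff', hw0, false_and,
      false_or] at h
    rcases h with h | h
    · exact hco.aeval_ne_zero h hw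
    · have h₁ := hDroots w hw
      have h₂ := hDroots _ h
      rw [norm_inv] at h₂
      exact (one_lt_inv₀ (norm_pos_iff.mpr hw0)).mpr h₁ |>.not_gt h₂
  · have h := congrArg (coeff · (N.natDegree + 1)) hQ
    rw [reciprocalPoly, coeff_add, coeff_X_pow_mul', coeff_X_pow_mul', if_neg (by omega),
      if_pos le_rfl, Nat.sub_self, mul_coeff_zero, coeff_zero_reverse, hD.leadingCoeff, mul_one,
      zero_add, coeff_zero] at h
    exact hN0 h

lemma degree_X_sub_one_mul_lt (hD : D.Monic) (hdeg : N.degree < D.degree) :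
    ((X - 1) * N).degree < (X ^ (d + 1) * D).degree := by
  rcases eq_or_ne N 0 with rfl | hN
  · simpa [bot_lt_iff_ne_bot] using hD.ne_zero
  refine degree_lt_degree ?_
  rw [(monic_X_pow _).natDegree_mul hD, natDegree_X_pow]
  calc ((X - 1) * N).natDegree ≤ (X - 1 : ℝ[X]).natDegree + N.natDegree := natDegree_mul_le
    _ ≤ 1 + N.natDegree := by gcongr; simpa using natDegree_X_sub_C_le (1 : ℝ)
    _ < d + 1 + D.natDegree := by have := natDegree_lt_natDegree hN hdeg; omega

lemma sprR_X_pow_mul_lt_one (hD : D.Monic) (hDroots : ∀ z : ℂ, aeval z D = 0 → ‖z‖ < 1)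
    (k : ℕ) : sprR (X ^ k * D) < 1 := by
  refine spr_lt_of_forall_norm_lt ((((monic_X_pow k).mul hD).map _).ne_zero) one_pos fun z hz ↦ ?_
  rw [IsRoot, eval_map, ← aeval_def, map_mul, map_pow, aeval_X, mul_eq_zero] at hz
  rcases hz with hz | hz
  · simp [pow_eq_zero_iff'.mp hz |>.1]
  · exact hDroots z hz

/-- On the unit circle `α` is determined by the root `z` of `pda N D d α`, and `z` is a root of
`reciprocalPoly N D d`. -/
theorem finite_setOf_sprR_pda_eq_one (hco : IsCoprime N D) (hD : D.Monic)
    (hdeg : N.degree < D.degree) (hDroots : ∀ z : ℂ, aeval z D = 0 → ‖z‖ < 1) (hN : N ≠ 0)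
    (hNcirc : ∀ z : ℂ, ‖z‖ = 1 → aeval z N ≠ 0) :
    {α | sprR (pda N D d α) = 1}.Finite := by
  refine (((reciprocalPoly N D d).rootSet_finite ℂ).image
    fun z ↦ (z ^ (d + 1) * aeval z D / ((z - 1) * aeval z N)).re).subset fun α hα ↦ ?_
  have hpos : 0 < ((pda N D d α).map (algebraMap ℝ ℂ)).degree := by
    rw [degree_map, ← natDegree_pos_iff_degree_pos, pda,
      natDegree_sub_C_mul (degree_X_sub_one_mul_lt hD hdeg), (monic_X_pow _).natDegree_mul hD,
      natDegree_X_pow]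
    omega
  obtain ⟨z, hz, hz1⟩ := exists_isRoot_norm_eq_spr hpos
  rw [IsRoot, eval_map, ← aeval_def] at hz
  change ‖z‖ = sprR _ at hz1
  rw [hα] at hz1
  have hz1' : z - 1 ≠ 0 := sub_ne_zero.mpr fun h ↦ by
    subst h
    simpa using hDroots 1 (by simpa [aeval_pda] using hz)
  refine ⟨z, (mem_rootSet.mpr ⟨reciprocalPoly_ne_zero hco hD hdeg hDroots hN,
    aeval_reciprocalPoly_eq_zero hz1 hz⟩), ?_⟩
  rw [aeval_pda, sub_eq_zero] at hz
  dsimp only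
  rw [hz, mul_div_cancel_right₀ _ (mul_ne_zero hz1' (hNcirc z hz1)), Complex.ofReal_re]

end PerturbedPolynomial

theorem stmt7 (N D : ℝ[X]) (hco : IsCoprime N D) (hD : D.Monic)
    (hdeg : N.degree < D.degree)
    (hDroots : ∀ z : ℂ, Polynomial.aeval z D = 0 → ‖z‖ < 1)
    (hN : N ≠ 0)
    (hNcirc : ∀ z : ℂ, ‖z‖ = 1 → Polynomial.aeval z N ≠ 0) :
    ∀ d : ℕ, ∃ α₀ αd α₁ : ℝ, α₀ < 0 ∧ α₁ < αd ∧ αd < α₀ ∧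
      sprR (pda N D d αd) = 1 ∧
      (∀ α ∈ Set.Ioo αd α₀, sprR (pda N D d α) < 1) ∧
      (∀ α ∈ Set.Ioo α₁ αd, sprR (pda N D d α) > 1) := by
  intro d
  have hP : (X ^ (d + 1) * D).Monic := (monic_X_pow _).mul hD
  have hT := degree_X_sub_one_mul_lt (N := N) (d := d) hD hdeg
  have hT0 : (X - 1) * N ≠ 0 := mul_ne_zero (by simpa using X_sub_C_ne_zero (1 : ℝ)) hN
  obtain ⟨A, hA, hA1⟩ := exists_neg_one_lt_sprR_sub_C_mul hP hT hT0
  have h0 : sprR (pda N D d 0) < 1 := by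
    simpa [pda] using sprR_X_pow_mul_lt_one hD hDroots (d + 1)
  exact exists_isolated_downcrossing (continuous_sprR_sub_C_mul hP hT) hA hA1 h0
    (finite_setOf_sprR_pda_eq_one hco hD hdeg hDroots hN hNcirc)
end
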